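/- (Theorem 5.1, stability part) For all t ≥ 0, V*(e(t), W̃(t), e_L(t), x̃(t)) ≤ V*(e(0), W̃(0), 0, 0); in particular, the solution (e, W̃, e_L, x̃) of the modified error dynamics is uniformly bounded: each of sup_{t≥0}‖e(t)‖₂, sup_{t≥0}‖W̃(t)‖_F, sup_{t≥0}‖e_L(t)‖₂, and sup_{t≥0}‖x̃(t)‖₂ is finite. -/

import Mathlib

open Matrix Filter

noncomputable section

/-- Euclidean norm ‖·‖₂ of a vector. -/
def norm2 {n : ℕ} (v : Fin n → ℝ) : ℝ := Real.sqrt (∑ i, v i ^ 2)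

/-- Supremum (infinity) norm ‖·‖_∞ of a vector (the sup norm on `Fin n → ℝ`). -/
def normInf {n : ℕ} (v : Fin n → ℝ) : ℝ := ‖v‖

/-- Frobenius norm ‖·‖_F of a matrix. -/
def normF {N m : ℕ} (W : Matrix (Fin N) (Fin m) ℝ) : ℝ := Real.sqrt (∑ i, ∑ j, W i j ^ 2)

/-- Smallest eigenvalue λ_min of a real symmetric (Hermitian) matrix. -/
def lamMin {n : ℕ} {A : Matrix (Fin n) (Fin n) ℝ} (hA : A.IsHermitian) : ℝ := ⨅ i, hA.eigenvalues i

/-- Largest eigenvalue λ_max of a real symmetric (Hermitian) matrix. -/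
def lamMax {n : ℕ} {A : Matrix (Fin n) (Fin n) ℝ} (hA : A.IsHermitian) : ℝ := ⨆ i, hA.eigenvalues i

/-- A real square matrix is Hurwitz if every (complex) eigenvalue has negative real part. -/
def Hurwitz {n : ℕ} (A : Matrix (Fin n) (Fin n) ℝ) : Prop :=
  ∀ μ : ℂ, (A.map Complex.ofReal).charpoly.IsRoot μ → μ.re < 0

/-- The Lyapunov function V(e, W̃) = eᵀ P e + γ⁻¹ tr((W̃ Λ^{1/2})ᵀ (W̃ Λ^{1/2})). -/
def Vlyap {n N m : ℕ} (γ : ℝ) (P : Matrix (Fin n) (Fin n) ℝ)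
    (Lhalf : Matrix (Fin m) (Fin m) ℝ) (e : Fin n → ℝ) (W : Matrix (Fin N) (Fin m) ℝ) : ℝ :=
  e ⬝ᵥ (P *ᵥ e) + γ⁻¹ * ((W * Lhalf)ᵀ * (W * Lhalf)).trace

/-- The augmented Lyapunov function V* of Theorem 5.1. -/
def Vstar {n N m : ℕ} (γ κ η ξ : ℝ) (P R : Matrix (Fin n) (Fin n) ℝ)
    (hP : P.IsHermitian) (hR : R.IsHermitian)
    (Lhalf : Matrix (Fin m) (Fin m) ℝ)
    (e : Fin n → ℝ) (W : Matrix (Fin N) (Fin m) ℝ) (eL xt : Fin n → ℝ) : ℝ :=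
  Vlyap γ P Lhalf e W + η⁻¹ * κ * (eL ⬝ᵥ (P *ᵥ eL))
    + 2 * ξ * κ⁻¹ * (lamMax hP)⁻¹ * lamMin hR * (xt ⬝ᵥ (P *ᵥ xt))

/-! Along solutions, the adaptive law makes the derivative of `γ⁻¹ tr((W̃Λ^{1/2})ᵀ(W̃Λ^{1/2}))`
cancel the cross term `-2 eᵀPBΛW̃ᵀσ` in the derivative of `eᵀPe`, and the Lyapunov equation turns
the `A_r`-parts of the three quadratic forms into `-eᵀRe`, `-e_LᵀRe_L`, `-x̃ᵀRx̃`. The weight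
`κ/η` on `e_LᵀPe_L` makes the remaining `e`- and `e_L`-terms add up to `-2κ (e - e_L)ᵀP(e - e_L)`.
The only indefinite term left, `2cκ x̃ᵀP(e - e_L)` with `c` the weight of `x̃ᵀPx̃`, is split by
Young's inequality with `ε = λ_min(R) / (κ λ_max(P))` into `c x̃ᵀRx̃` and
`2ξκ (e - e_L)ᵀP(e - e_L)`, both dominated because `ξ < 1`. So `V*` is nonincreasing, and as each
of its summands is nonnegative, each is bounded by `V*` at time `0`; `P ≻ 0` and the
invertibility of `Λ^{1/2}` turn these into norm bounds. -/

section QuadraticForm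

variable {ι : Type*} [Fintype ι]

lemma Matrix.IsSymm.dotProduct_mulVec_comm {P : Matrix ι ι ℝ} (hP : P.IsSymm)
    (x z : ι → ℝ) : x ⬝ᵥ (P *ᵥ z) = z ⬝ᵥ (P *ᵥ x) := by
  rw [dotProduct_mulVec, ← mulVec_transpose, dotProduct_comm, hP.eq]

lemma Matrix.PosSemidef.dotProduct_mulVec_self_nonneg {P : Matrix ι ι ℝ} (hP : P.PosSemidef)
    (x : ι → ℝ) : 0 ≤ x ⬝ᵥ (P *ᵥ x) := by
  simpa using hP.dotProduct_mulVec_nonneg x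

lemma Matrix.PosSemidef.two_mul_dotProduct_mulVec_le {P : Matrix ι ι ℝ} (hP : P.PosSemidef)
    (x z : ι → ℝ) {ε : ℝ} (hε : 0 < ε) :
    2 * (x ⬝ᵥ (P *ᵥ z)) ≤ ε * (x ⬝ᵥ (P *ᵥ x)) + ε⁻¹ * (z ⬝ᵥ (P *ᵥ z)) := by
  have hsq := hP.dotProduct_mulVec_self_nonneg (ε • x - z)
  have hzx := (isHermitian_iff_isSymm.1 hP.1).dotProduct_mulVec_comm z x
  simp only [mulVec_sub, mulVec_smul, sub_dotProduct, dotProduct_sub, smul_dotProduct,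
    dotProduct_smul, smul_eq_mul, hzx] at hsq
  rw [← mul_le_mul_iff_of_pos_left hε, mul_add, ← mul_assoc ε ε⁻¹, mul_inv_cancel₀ hε.ne', one_mul]
  linarith

lemma dotProduct_mulVec_add_of_lyapunov {A P R : Matrix ι ι ℝ} (hP : P.IsSymm)
    (hLyap : Aᵀ * P + P * A + R = 0) (u w : ι → ℝ) :
    (A *ᵥ u + w) ⬝ᵥ (P *ᵥ u) + u ⬝ᵥ (P *ᵥ (A *ᵥ u + w))
      = -(u ⬝ᵥ (R *ᵥ u)) + 2 * (u ⬝ᵥ (P *ᵥ w)) := by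
  have hquad : u ⬝ᵥ (Aᵀ *ᵥ (P *ᵥ u)) + u ⬝ᵥ (P *ᵥ (A *ᵥ u)) + u ⬝ᵥ (R *ᵥ u) = 0 := by
    simpa only [add_mulVec, dotProduct_add, ← mulVec_mulVec, zero_mulVec, dotProduct_zero]
      using congrArg (fun M => u ⬝ᵥ (M *ᵥ u)) hLyap
  have hA : (A *ᵥ u) ⬝ᵥ (P *ᵥ u) = u ⬝ᵥ (Aᵀ *ᵥ (P *ᵥ u)) := by
    rw [mulVec_transpose, dotProduct_comm, dotProduct_mulVec, dotProduct_comm]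
  rw [add_dotProduct, mulVec_add, dotProduct_add, hA, hP.dotProduct_mulVec_comm w u]
  linear_combination hquad

end QuadraticForm

section Derivatives

variable {ι ι' : Type*} [Fintype ι] {t : ℝ}

lemma HasDerivAt.dotProduct {u v : ℝ → ι → ℝ} {u' v' : ι → ℝ} (hu : HasDerivAt u u' t)
    (hv : HasDerivAt v v' t) : HasDerivAt (fun s => u s ⬝ᵥ v s) (u' ⬝ᵥ v t + u t ⬝ᵥ v') t := by
  simp only [_root_.dotProduct, ← Finset.sum_add_distrib]
  exact HasDerivAt.fun_sum fun i _ => (hasDerivAt_pi.1 hu i).mul (hasDerivAt_pi.1 hv i)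

lemma HasDerivAt.mulVec (A : Matrix ι' ι ℝ) {u : ℝ → ι → ℝ} {u' : ι → ℝ}
    (hu : HasDerivAt u u' t) : HasDerivAt (fun s => A *ᵥ u s) (A *ᵥ u') t :=
  hasDerivAt_pi.2 fun i => by
    have h := (hasDerivAt_const t (A i)).dotProduct hu
    rwa [zero_dotProduct, zero_add] at h

lemma HasDerivAt.dotProduct_mulVec_self (P : Matrix ι ι ℝ) {u : ℝ → ι → ℝ} {u' : ι → ℝ}
    (hu : HasDerivAt u u' t) :
    HasDerivAt (fun s => u s ⬝ᵥ (P *ᵥ u s)) (u' ⬝ᵥ (P *ᵥ u t) + u t ⬝ᵥ (P *ᵥ u')) t :=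
  hu.dotProduct (hu.mulVec P)

lemma HasDerivAt.dotProduct_mulVec_self_of_lyapunov {A P R : Matrix ι ι ℝ} (hP : P.IsSymm)
    (hLyap : Aᵀ * P + P * A + R = 0) {u : ℝ → ι → ℝ} {w : ι → ℝ}
    (hu : HasDerivAt u (A *ᵥ u t + w) t) :
    HasDerivAt (fun s => u s ⬝ᵥ (P *ᵥ u s)) (-(u t ⬝ᵥ (R *ᵥ u t)) + 2 * (u t ⬝ᵥ (P *ᵥ w))) t :=
  (hu.dotProduct_mulVec_self P).congr_deriv (dotProduct_mulVec_add_of_lyapunov hP hLyap _ _)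

end Derivatives

section WeightTerm

variable {ι ι' : Type*} [Fintype ι] [Fintype ι']

lemma trace_transpose_mul_self_mul_eq_sum (W : Matrix ι ι' ℝ) (L : Matrix ι' ι' ℝ) :
    ((W * L)ᵀ * (W * L)).trace = ∑ i, W i ⬝ᵥ ((L * Lᵀ) *ᵥ W i) := by
  have hrow : ∀ i, (W * L) i = W i ᵥ* L := fun i => rfl
  calc ((W * L)ᵀ * (W * L)).trace = ∑ i, (W * L) i ⬝ᵥ (W * L) i := by
        simp only [trace, diag_apply, mul_apply, transpose_apply, dotProduct]
        exact Finset.sum_comm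
    _ = ∑ i, W i ⬝ᵥ ((L * Lᵀ) *ᵥ W i) := by
        simp only [hrow, ← mulVec_mulVec, mulVec_transpose, dotProduct_mulVec]

lemma hasDerivAt_trace_of_adaptive_law {L Λ : Matrix ι' ι' ℝ} (hL : L.IsSymm) (hLL : L * L = Λ)
    {γ : ℝ} (hγ : γ ≠ 0) {W : ℝ → Matrix ι ι' ℝ} {σ : ι → ℝ} {v : ι' → ℝ} {t : ℝ}
    (hW : ∀ i j, HasDerivAt (fun s => W s i j) (γ * (σ i * v j)) t) :
    HasDerivAt (fun s => γ⁻¹ * ((W s * L)ᵀ * (W s * L)).trace)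
      (2 * (v ⬝ᵥ (Λ *ᵥ ((W t)ᵀ *ᵥ σ)))) t := by
  have hΛ : Λ.IsSymm := by rw [← hLL, IsSymm, transpose_mul, hL.eq]
  have hrow : ∀ i, HasDerivAt (fun s => W s i) ((γ * σ i) • v) t := fun i =>
    hasDerivAt_pi.2 fun j => by simpa only [Pi.smul_apply, smul_eq_mul, mul_assoc] using hW i j
  have hsum := HasDerivAt.fun_sum (u := Finset.univ) fun i _ =>
    ((hrow i).dotProduct_mulVec_self Λ).const_mul γ⁻¹
  simp only [trace_transpose_mul_self_mul_eq_sum, hL.eq, hLL, Finset.mul_sum]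
  refine hsum.congr_deriv ?_
  simp only [hΛ.dotProduct_mulVec_comm (W t _), mulVec_transpose, vecMul_eq_sum, mulVec_sum,
    dotProduct_sum, Finset.mul_sum, mulVec_smul, dotProduct_smul, smul_dotProduct, smul_eq_mul]
  refine Finset.sum_congr rfl fun i _ => ?_
  field_simp
  ring

end WeightTerm

section Eigenvalues

variable {n : ℕ}

lemma Matrix.IsHermitian.exists_dotProduct_mulVec_eq_sum_eigenvalues {ι : Type*} [Fintype ι]
    [DecidableEq ι] {A : Matrix ι ι ℝ} (hA : A.IsHermitian) (v : ι → ℝ) :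
    ∃ w : ι → ℝ, v ⬝ᵥ (A *ᵥ v) = ∑ i, hA.eigenvalues i * w i ^ 2 ∧ v ⬝ᵥ v = ∑ i, w i ^ 2 := by
  set U : Matrix ι ι ℝ := (hA.eigenvectorUnitary : Matrix ι ι ℝ)
  have hvU : v ᵥ* U = star U *ᵥ v := by
    rw [star_eq_conjTranspose, conjTranspose_eq_transpose_of_trivial, mulVec_transpose]
  refine ⟨star U *ᵥ v, ?_, ?_⟩
  · conv_lhs => rw [hA.spectral_theorem, Unitary.conjStarAlgAut_apply]
    rw [← mulVec_mulVec, ← mulVec_mulVec, dotProduct_mulVec, hvU]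
    simp only [dotProduct, mulVec_diagonal, Function.comp_apply, RCLike.ofReal_real_eq_id, id_eq]
    exact Finset.sum_congr rfl fun i _ => by ring
  · have hUU : U * star U = 1 := Matrix.mem_unitaryGroup_iff.mp hA.eigenvectorUnitary.2
    calc v ⬝ᵥ v = v ⬝ᵥ ((U * star U) *ᵥ v) := by rw [hUU, one_mulVec]
      _ = ∑ i, (star U *ᵥ v) i ^ 2 := by
        rw [← mulVec_mulVec, dotProduct_mulVec, hvU]
        simp only [dotProduct, sq]

lemma lamMin_mul_dotProduct_le {A : Matrix (Fin n) (Fin n) ℝ} (hA : A.IsHermitian)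
    (v : Fin n → ℝ) : lamMin hA * (v ⬝ᵥ v) ≤ v ⬝ᵥ (A *ᵥ v) := by
  obtain ⟨w, hAv, hv⟩ := hA.exists_dotProduct_mulVec_eq_sum_eigenvalues v
  rw [hAv, hv, lamMin, Finset.mul_sum]
  exact Finset.sum_le_sum fun i _ =>
    mul_le_mul_of_nonneg_right (ciInf_le (Finite.bddBelow_range _) i) (sq_nonneg _)

lemma dotProduct_mulVec_le_lamMax_mul {A : Matrix (Fin n) (Fin n) ℝ}
    (hA : A.IsHermitian) (v : Fin n → ℝ) : v ⬝ᵥ (A *ᵥ v) ≤ lamMax hA * (v ⬝ᵥ v) := by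
  obtain ⟨w, hAv, hv⟩ := hA.exists_dotProduct_mulVec_eq_sum_eigenvalues v
  rw [hAv, hv, lamMax, Finset.mul_sum]
  exact Finset.sum_le_sum fun i _ =>
    mul_le_mul_of_nonneg_right (le_ciSup (Finite.bddAbove_range _) i) (sq_nonneg _)

lemma Matrix.PosSemidef.lamMin_nonneg {A : Matrix (Fin n) (Fin n) ℝ} (hA : A.PosSemidef) :
    0 ≤ lamMin hA.1 :=
  Real.iInf_nonneg hA.eigenvalues_nonneg

lemma Matrix.PosSemidef.lamMax_nonneg {A : Matrix (Fin n) (Fin n) ℝ} (hA : A.PosSemidef) :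
    0 ≤ lamMax hA.1 :=
  Real.iSup_nonneg hA.eigenvalues_nonneg

lemma Matrix.PosDef.lamMin_pos (hn : 0 < n) {A : Matrix (Fin n) (Fin n) ℝ} (hA : A.PosDef) :
    0 < lamMin hA.1 := by
  have : Nonempty (Fin n) := ⟨⟨0, hn⟩⟩
  obtain ⟨i, hi⟩ := Finite.exists_min hA.1.eigenvalues
  exact (hA.eigenvalues_pos i).trans_le (le_ciInf hi)

lemma Matrix.PosDef.lamMax_pos (hn : 0 < n) {A : Matrix (Fin n) (Fin n) ℝ} (hA : A.PosDef) :
    0 < lamMax hA.1 :=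
  (hA.eigenvalues_pos ⟨0, hn⟩).trans_le (le_ciSup (Finite.bddAbove_range _) _)

lemma norm2_eq_sqrt_dotProduct (v : Fin n → ℝ) : norm2 v = √(v ⬝ᵥ v) := by
  simp only [norm2, dotProduct, sq]

lemma norm2_le_of_mul_dotProduct_mulVec_le (hn : 0 < n) {P : Matrix (Fin n) (Fin n) ℝ}
    (hP : P.PosDef) {a K : ℝ} (ha : 0 < a) {v : Fin n → ℝ} (hv : a * (v ⬝ᵥ (P *ᵥ v)) ≤ K) :
    norm2 v ≤ √(K / (a * lamMin hP.1)) := by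
  rw [norm2_eq_sqrt_dotProduct]
  refine Real.sqrt_le_sqrt ?_
  rw [le_div_iff₀ (mul_pos ha (hP.lamMin_pos hn))]
  calc v ⬝ᵥ v * (a * lamMin hP.1) = a * (lamMin hP.1 * (v ⬝ᵥ v)) := by ring
    _ ≤ a * (v ⬝ᵥ (P *ᵥ v)) := by gcongr; exact lamMin_mul_dotProduct_le hP.1 v
    _ ≤ K := hv

end Eigenvalues

section Frobenius

variable {N m k : ℕ}

open scoped Matrix.Norms.Frobenius

lemma normF_eq_norm (W : Matrix (Fin N) (Fin m) ℝ) : normF W = ‖W‖ := by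
  rw [normF, frobenius_norm_def, Real.sqrt_eq_rpow]
  simp only [Real.norm_eq_abs, Real.rpow_two, sq_abs]

lemma normF_mul_le (A : Matrix (Fin N) (Fin m) ℝ) (B : Matrix (Fin m) (Fin k) ℝ) :
    normF (A * B) ≤ normF A * normF B := by
  simp only [normF_eq_norm]
  exact frobenius_norm_mul A B

lemma normF_eq_sqrt_trace (W : Matrix (Fin N) (Fin m) ℝ) : normF W = √(Wᵀ * W).trace := by
  rw [normF, trace, Finset.sum_comm]
  simp only [diag_apply, mul_apply, transpose_apply, sq]

lemma normF_le_of_mul_trace_le {L : Matrix (Fin m) (Fin m) ℝ} (hL : IsUnit L.det)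
    {W : Matrix (Fin N) (Fin m) ℝ} {a K : ℝ} (ha : 0 < a)
    (hW : a * ((W * L)ᵀ * (W * L)).trace ≤ K) : normF W ≤ √(K / a) * normF L⁻¹ := by
  calc normF W = normF (W * L * L⁻¹) := by rw [Matrix.mul_nonsing_inv_cancel_right _ _ hL]
    _ ≤ normF (W * L) * normF L⁻¹ := normF_mul_le _ _
    _ ≤ √(K / a) * normF L⁻¹ := by
      gcongr
      · exact Real.sqrt_nonneg _
      · rw [normF_eq_sqrt_trace]
        exact Real.sqrt_le_sqrt ((le_div_iff₀' ha).2 hW)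

end Frobenius

section ModifiedErrorDynamics

variable {n N m : ℕ} {Ar P R : Matrix (Fin n) (Fin n) ℝ} {B : Matrix (Fin n) (Fin m) ℝ}
  {Lam Lhalf : Matrix (Fin m) (Fin m) ℝ} {γ : ℝ} {t : ℝ}

lemma hasDerivAt_Vlyap (hP : P.IsSymm) (hLyap : Arᵀ * P + P * Ar + R = 0) (hL : Lhalf.IsSymm)
    (hLL : Lhalf * Lhalf = Lam) (hγ : γ ≠ 0) {e : ℝ → Fin n → ℝ}
    {W : ℝ → Matrix (Fin N) (Fin m) ℝ} {σ : Fin N → ℝ} {d : Fin n → ℝ}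
    (he : HasDerivAt e (Ar *ᵥ e t - (B * Lam * (W t)ᵀ) *ᵥ σ - d) t)
    (hW : ∀ i j, HasDerivAt (fun s => W s i j) (γ * (σ i * (e t ᵥ* (P * B)) j)) t) :
    HasDerivAt (fun s => Vlyap γ P Lhalf (e s) (W s))
      (-(e t ⬝ᵥ (R *ᵥ e t)) - 2 * (e t ⬝ᵥ (P *ᵥ d))) t := by
  rw [sub_sub, sub_eq_add_neg] at he
  have hcross : e t ᵥ* (P * B) ⬝ᵥ (Lam *ᵥ ((W t)ᵀ *ᵥ σ))
      = e t ⬝ᵥ (P *ᵥ ((B * Lam * (W t)ᵀ) *ᵥ σ)) := by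
    rw [← dotProduct_mulVec]
    simp only [mulVec_mulVec, Matrix.mul_assoc]
  refine ((he.dotProduct_mulVec_self_of_lyapunov hP hLyap).add
    (hasDerivAt_trace_of_adaptive_law hL hLL hγ hW)).congr_deriv ?_
  rw [hcross, mulVec_neg, dotProduct_neg, mulVec_add, dotProduct_add]
  ring

def VstarDeriv (κ η ξ : ℝ) (P R : Matrix (Fin n) (Fin n) ℝ) (hP : P.IsHermitian)
    (hR : R.IsHermitian) (e eL xt : Fin n → ℝ) : ℝ :=
  -(e ⬝ᵥ (R *ᵥ e)) - η⁻¹ * κ * (eL ⬝ᵥ (R *ᵥ eL))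
    - 2 * ξ * κ⁻¹ * (lamMax hP)⁻¹ * lamMin hR
      * (xt ⬝ᵥ (R *ᵥ xt) - 2 * κ * (xt ⬝ᵥ (P *ᵥ (e - eL))))
    - 2 * κ * ((e - eL) ⬝ᵥ (P *ᵥ (e - eL)))

lemma hasDerivAt_Vstar {κ η ξ : ℝ} (hP : P.IsHermitian) (hR : R.IsHermitian)
    (hLyap : Arᵀ * P + P * Ar + R = 0) (hL : Lhalf.IsSymm) (hLL : Lhalf * Lhalf = Lam)
    (hγ : γ ≠ 0) (hη : η ≠ 0) {σ : Fin N → ℝ} {e eL xt : ℝ → Fin n → ℝ}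
    {W : ℝ → Matrix (Fin N) (Fin m) ℝ}
    (he : HasDerivAt e (Ar *ᵥ e t - (B * Lam * (W t)ᵀ) *ᵥ σ - κ • (e t - eL t)) t)
    (hW : ∀ i j, HasDerivAt (fun s => W s i j) (γ * (σ i * (e t ᵥ* (P * B)) j)) t)
    (heL : HasDerivAt eL (Ar *ᵥ eL t + η • (e t - eL t)) t)
    (hxt : HasDerivAt xt (Ar *ᵥ xt t + κ • (e t - eL t)) t) :
    HasDerivAt (fun s => Vstar γ κ η ξ P R hP hR Lhalf (e s) (W s) (eL s) (xt s))
      (VstarDeriv κ η ξ P R hP hR (e t) (eL t) (xt t)) t := by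
  have hPs := isHermitian_iff_isSymm.1 hP
  refine (((hasDerivAt_Vlyap hPs hLyap hL hLL hγ he hW).add
    ((heL.dotProduct_mulVec_self_of_lyapunov hPs hLyap).const_mul (η⁻¹ * κ))).add
    ((hxt.dotProduct_mulVec_self_of_lyapunov hPs hLyap).const_mul
      (2 * ξ * κ⁻¹ * (lamMax hP)⁻¹ * lamMin hR))).congr_deriv ?_
  simp only [VstarDeriv, mulVec_smul, dotProduct_smul, smul_eq_mul, sub_dotProduct]
  field_simp
  ring

lemma VstarDeriv_nonpos {κ η ξ : ℝ} (hn : 0 < n) (hP : P.PosDef) (hR : R.PosDef) (hκ : 0 < κ)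
    (hη : 0 < η) (hξ0 : 0 ≤ ξ) (hξ1 : ξ ≤ 1) (e eL xt : Fin n → ℝ) :
    VstarDeriv κ η ξ P R hP.1 hR.1 e eL xt ≤ 0 := by
  set z := e - eL
  set c := 2 * ξ * κ⁻¹ * (lamMax hP.1)⁻¹ * lamMin hR.1
  have hlamP := hP.lamMax_pos hn
  have hlamR := hR.lamMin_pos hn
  have hc : 0 ≤ c := by positivity
  set ε := lamMin hR.1 / (κ * lamMax hP.1)
  have hε : 0 < ε := by positivity
  have hxRx : lamMin hR.1 * (xt ⬝ᵥ xt) ≤ xt ⬝ᵥ (R *ᵥ xt) := lamMin_mul_dotProduct_le hR.1 xt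
  have hxPx : xt ⬝ᵥ (P *ᵥ xt) ≤ lamMax hP.1 * (xt ⬝ᵥ xt) := dotProduct_mulVec_le_lamMax_mul hP.1 xt
  have hzPz := hP.posSemidef.dotProduct_mulVec_self_nonneg z
  have key : c * (2 * κ * (xt ⬝ᵥ (P *ᵥ z)))
      ≤ c * (xt ⬝ᵥ (R *ᵥ xt)) + 2 * ξ * κ * (z ⬝ᵥ (P *ᵥ z)) :=
    calc c * (2 * κ * (xt ⬝ᵥ (P *ᵥ z)))
        = c * κ * (2 * (xt ⬝ᵥ (P *ᵥ z))) := by ring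
      _ ≤ c * κ * (ε * (xt ⬝ᵥ (P *ᵥ xt)) + ε⁻¹ * (z ⬝ᵥ (P *ᵥ z))) := by
        gcongr
        exact hP.posSemidef.two_mul_dotProduct_mulVec_le xt z hε
      _ ≤ c * κ * (ε * (lamMax hP.1 * (xt ⬝ᵥ xt)) + ε⁻¹ * (z ⬝ᵥ (P *ᵥ z))) := by gcongr
      _ = c * (lamMin hR.1 * (xt ⬝ᵥ xt)) + 2 * ξ * κ * (z ⬝ᵥ (P *ᵥ z)) := by
        simp only [c, ε]
        field_simp
      _ ≤ c * (xt ⬝ᵥ (R *ᵥ xt)) + 2 * ξ * κ * (z ⬝ᵥ (P *ᵥ z)) := by gcongr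
  have hξz : ξ * (κ * (z ⬝ᵥ (P *ᵥ z))) ≤ κ * (z ⬝ᵥ (P *ᵥ z)) :=
    mul_le_of_le_one_left (by positivity) hξ1
  have heRe := hR.posSemidef.dotProduct_mulVec_self_nonneg e
  have heLReL := hR.posSemidef.dotProduct_mulVec_self_nonneg eL
  have hηκ : 0 ≤ η⁻¹ * κ * (eL ⬝ᵥ (R *ᵥ eL)) := by positivity
  rw [VstarDeriv]
  linarith

lemma Vstar_summands_le {κ η ξ V : ℝ} (hP : P.PosDef) (hR : R.PosDef) (hγ : 0 < γ) (hκ : 0 < κ) (hη : 0 < η)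
    (hξ : 0 ≤ ξ) {e eL xt : Fin n → ℝ} {W : Matrix (Fin N) (Fin m) ℝ}
    (hV : Vstar γ κ η ξ P R hP.1 hR.1 Lhalf e W eL xt ≤ V) :
    e ⬝ᵥ (P *ᵥ e) ≤ V ∧ γ⁻¹ * ((W * Lhalf)ᵀ * (W * Lhalf)).trace ≤ V
      ∧ η⁻¹ * κ * (eL ⬝ᵥ (P *ᵥ eL)) ≤ V
      ∧ 2 * ξ * κ⁻¹ * (lamMax hP.1)⁻¹ * lamMin hR.1 * (xt ⬝ᵥ (P *ᵥ xt)) ≤ V := by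
  have hPe := hP.posSemidef.dotProduct_mulVec_self_nonneg e
  have hPeL := hP.posSemidef.dotProduct_mulVec_self_nonneg eL
  have hPxt := hP.posSemidef.dotProduct_mulVec_self_nonneg xt
  have htr : 0 ≤ ((W * Lhalf)ᵀ * (W * Lhalf)).trace := by
    simpa only [conjTranspose_eq_transpose_of_trivial]
      using (posSemidef_conjTranspose_mul_self (W * Lhalf)).trace_nonneg
  have hc : 0 ≤ 2 * ξ * κ⁻¹ * (lamMax hP.1)⁻¹ * lamMin hR.1 := by
    have := hP.posSemidef.lamMax_nonneg
    have := hR.posSemidef.lamMin_nonneg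
    positivity
  simp only [Vstar, Vlyap] at hV
  refine ⟨?_, ?_, ?_, ?_⟩ <;> linarith [mul_nonneg (inv_nonneg.2 hγ.le) htr,
    mul_nonneg (by positivity : 0 ≤ η⁻¹ * κ) hPeL, mul_nonneg hc hPxt]

end ModifiedErrorDynamics

theorem statement6_general
    {n N m : ℕ} (hn : 0 < n)
    (Ar : Matrix (Fin n) (Fin n) ℝ) (B : Matrix (Fin n) (Fin m) ℝ)
    (Lam Lhalf : Matrix (Fin m) (Fin m) ℝ) (R P : Matrix (Fin n) (Fin n) ℝ)
    (hLam : Lam.PosDef)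
    (hLhalfDiag : Lhalf.IsDiag) (hLhalfSq : Lhalf * Lhalf = Lam)
    (hR : R.PosDef) (hP : P.PosDef)
    (hLyap : Arᵀ * P + P * Ar + R = 0)
    (γ κ η ξ : ℝ) (hγ : 0 < γ) (hκ : 0 < κ) (hη : 0 < η) (hξ0 : 0 < ξ) (hξ1 : ξ < 1)
    (σx : ℝ → Fin N → ℝ)
    (e eL xt : ℝ → Fin n → ℝ) (Wt : ℝ → Matrix (Fin N) (Fin m) ℝ)
    (heL0 : eL 0 = 0) (hxt0 : xt 0 = 0)
    (he : ∀ t ≥ (0:ℝ), HasDerivAt e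
          (Ar *ᵥ e t - (B * Lam * (Wt t)ᵀ) *ᵥ σx t - κ • (e t - eL t)) t)
    (hW : ∀ t ≥ (0:ℝ), ∀ i j, HasDerivAt (fun s => Wt s i j)
          (γ * (σx t i * ((e t) ᵥ* (P * B)) j)) t)
    (heL : ∀ t ≥ (0:ℝ), HasDerivAt eL (Ar *ᵥ eL t + η • (e t - eL t)) t)
    (hxt : ∀ t ≥ (0:ℝ), HasDerivAt xt (Ar *ᵥ xt t + κ • (e t - eL t)) t)
    : (∀ t ≥ (0:ℝ),
        Vstar γ κ η ξ P R hP.1 hR.1 Lhalf (e t) (Wt t) (eL t) (xt t)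
          ≤ Vstar γ κ η ξ P R hP.1 hR.1 Lhalf (e 0) (Wt 0) 0 0)
      ∧ (∃ C : ℝ, ∀ t ≥ (0:ℝ), norm2 (e t) ≤ C)
      ∧ (∃ C : ℝ, ∀ t ≥ (0:ℝ), normF (Wt t) ≤ C)
      ∧ (∃ C : ℝ, ∀ t ≥ (0:ℝ), norm2 (eL t) ≤ C)
      ∧ (∃ C : ℝ, ∀ t ≥ (0:ℝ), norm2 (xt t) ≤ C) := by
  set V := fun s => Vstar γ κ η ξ P R hP.1 hR.1 Lhalf (e s) (Wt s) (eL s) (xt s)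
  have hderiv : ∀ t ≥ (0:ℝ), HasDerivAt V (VstarDeriv κ η ξ P R hP.1 hR.1 (e t) (eL t) (xt t)) t :=
    fun t ht => hasDerivAt_Vstar hP.1 hR.1 hLyap hLhalfDiag.isSymm hLhalfSq hγ.ne' hη.ne'
      (he t ht) (hW t ht) (heL t ht) (hxt t ht)
  have hanti : AntitoneOn V (Set.Ici 0) :=
    antitoneOn_of_hasDerivWithinAt_nonpos (convex_Ici 0)
      (fun s hs => (hderiv s hs).continuousAt.continuousWithinAt)
      (fun s hs => (hderiv s (interior_subset hs)).hasDerivWithinAt)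
      (fun _ _ => VstarDeriv_nonpos hn hP hR hκ hη hξ0.le hξ1.le _ _ _)
  have hV : ∀ t ≥ (0:ℝ), V t ≤ Vstar γ κ η ξ P R hP.1 hR.1 Lhalf (e 0) (Wt 0) 0 0 :=
    fun t ht => by simpa only [V, heL0, hxt0] using hanti Set.self_mem_Ici ht ht
  have hterms := fun t (ht : t ≥ 0) => Vstar_summands_le hP hR hγ hκ hη hξ0.le (hV t ht)
  have hLhalf : IsUnit Lhalf.det :=
    isUnit_of_mul_isUnit_left (by rw [← det_mul, hLhalfSq]; exact hLam.det_pos.ne'.isUnit)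
  refine ⟨hV, ⟨_, fun t ht => norm2_le_of_mul_dotProduct_mulVec_le hn hP one_pos
      ((one_mul _).trans_le (hterms t ht).1)⟩,
    ⟨_, fun t ht => normF_le_of_mul_trace_le hLhalf (inv_pos.2 hγ) (hterms t ht).2.1⟩,
    ⟨_, fun t ht => norm2_le_of_mul_dotProduct_mulVec_le hn hP (by positivity) (hterms t ht).2.2.1⟩,
    ⟨_, fun t ht => norm2_le_of_mul_dotProduct_mulVec_le hn hP ?_ (hterms t ht).2.2.2⟩⟩
  have := hP.lamMax_pos hn
  have := hR.lamMin_pos hn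
  positivity

theorem statement6
    {n N m : ℕ} (hn : 0 < n) (hN : 0 < N) (hm : 0 < m)
    (Ar : Matrix (Fin n) (Fin n) ℝ) (B : Matrix (Fin n) (Fin m) ℝ)
    (Lam Lhalf : Matrix (Fin m) (Fin m) ℝ) (R P : Matrix (Fin n) (Fin n) ℝ)
    (hAr : Hurwitz Ar)
    (hLam : Lam.PosDef) (hLamDiag : Lam.IsDiag)
    (hLhalfDiag : Lhalf.IsDiag) (hLhalfSq : Lhalf * Lhalf = Lam)
    (hR : R.PosDef) (hP : P.PosDef)
    (hLyap : Arᵀ * P + P * Ar + R = 0)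
    (γ κ η ξ : ℝ) (hγ : 0 < γ) (hκ : 0 < κ) (hη : 0 < η) (hξ0 : 0 < ξ) (hξ1 : ξ < 1)
    (σx : ℝ → Fin N → ℝ)
    (e eL xt : ℝ → Fin n → ℝ) (Wt : ℝ → Matrix (Fin N) (Fin m) ℝ)
    (heL0 : eL 0 = 0) (hxt0 : xt 0 = 0)
    (he : ∀ t ≥ (0:ℝ), HasDerivAt e
          (Ar *ᵥ e t - (B * Lam * (Wt t)ᵀ) *ᵥ σx t - κ • (e t - eL t)) t)
    (hW : ∀ t ≥ (0:ℝ), ∀ i j, HasDerivAt (fun s => Wt s i j)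
          (γ * (σx t i * ((e t) ᵥ* (P * B)) j)) t)
    (heL : ∀ t ≥ (0:ℝ), HasDerivAt eL (Ar *ᵥ eL t + η • (e t - eL t)) t)
    (hxt : ∀ t ≥ (0:ℝ), HasDerivAt xt (Ar *ᵥ xt t + κ • (e t - eL t)) t)
    : (∀ t ≥ (0:ℝ),
        Vstar γ κ η ξ P R hP.1 hR.1 Lhalf (e t) (Wt t) (eL t) (xt t)
          ≤ Vstar γ κ η ξ P R hP.1 hR.1 Lhalf (e 0) (Wt 0) 0 0)
      ∧ (∃ C : ℝ, ∀ t ≥ (0:ℝ), norm2 (e t) ≤ C)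
      ∧ (∃ C : ℝ, ∀ t ≥ (0:ℝ), normF (Wt t) ≤ C)
      ∧ (∃ C : ℝ, ∀ t ≥ (0:ℝ), norm2 (eL t) ≤ C)
      ∧ (∃ C : ℝ, ∀ t ≥ (0:ℝ), norm2 (xt t) ≤ C) :=
  statement6_general hn Ar B Lam Lhalf R P hLam hLhalfDiag hLhalfSq hR hP hLyap γ κ η ξ hγ hκ hη hξ0
    hξ1 σx e eL xt Wt heL0 hxt0 he hW heL hxt
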